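/- Let β > 0, ω > 0 and μ < ω be real numbers. Then 1/(exp(β(ω−μ)) − 1) = ∫₀^∞ h_b(t, βμ) · exp(−t β² ω²) dt, where h_b(t,a) = (4π)^{-1/2} t^{-3/2} Σ_{k=1}^∞ k · exp(−k²/(4t) + k·a). -/

import Mathlib

open MeasureTheory

/-- The bosonic subordination kernel
`h_b(t,a) = (4π)^{-1/2} t^{-3/2} Σ_{k≥1} k e^{−k²/(4t)+k a}`. -/
noncomputable def bosonicKernel (t a : ℝ) : ℝ :=
  (4 * Real.pi) ^ (-(1 : ℝ) / 2) * t ^ (-(3 : ℝ) / 2) *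
    ∑' k : ℕ, ((k : ℝ) + 1) * Real.exp (-((k : ℝ) + 1) ^ 2 / (4 * t) + ((k : ℝ) + 1) * a)

section BoseAux

open Set Real

lemma meas_exp_aux (b : ℝ) : Measurable (fun s : ℝ => Real.exp (-s ^ 2 - b / s ^ 2)) :=
  Real.measurable_exp.comp (((measurable_id.pow_const 2).neg).sub
    (measurable_const.div (measurable_id.pow_const 2)))

set_option maxHeartbeats 1000000 in
lemma integrableOn_exp_neg_sq_sub {b : ℝ} (hb : 0 ≤ b) :
    IntegrableOn (fun s : ℝ => Real.exp (-s ^ 2 - b / s ^ 2)) (Ioi 0) := by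
  have h1 : IntegrableOn (fun s : ℝ => Real.exp (-1 * s ^ 2)) (Ioi (0 : ℝ)) :=
    integrableOn_Ioi_exp_neg_mul_sq_iff.mpr one_pos
  refine Integrable.mono h1 ((meas_exp_aux b).aestronglyMeasurable) ?_
  filter_upwards [ae_restrict_mem measurableSet_Ioi] with s hs
  rw [Real.norm_eq_abs, Real.norm_eq_abs, abs_of_nonneg (Real.exp_nonneg _),
    abs_of_nonneg (Real.exp_nonneg _)]
  apply Real.exp_le_exp.mpr
  have : 0 ≤ b / s ^ 2 := div_nonneg hb (sq_nonneg s)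
  nlinarith

lemma glasser_image {a : ℝ} (ha : 0 < a) :
    (fun s : ℝ => s - a / s) '' Ioi 0 = univ := by
  apply eq_univ_of_forall
  intro y
  set lo : ℝ := min 1 (a / (1 + |y|)) with hlo_def
  set hi : ℝ := max 1 (y + a) with hhi_def
  have hlo_pos : 0 < lo := lt_min one_pos (div_pos ha (by positivity))
  have hlohi : lo ≤ hi := le_trans (min_le_left _ _) (le_max_left _ _)
  have hcont : ContinuousOn (fun s : ℝ => s - a / s) (Icc lo hi) := by
    apply ContinuousOn.sub continuousOn_id
    exact ContinuousOn.div continuousOn_const continuousOn_id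
      (fun x hx => ne_of_gt (lt_of_lt_of_le hlo_pos hx.1))
  have hflo : lo - a / lo ≤ y := by
    have h1 : lo ≤ a / (1 + |y|) := min_le_right _ _
    have h2 : 1 + |y| ≤ a / lo := by
      rw [le_div_iff₀ hlo_pos]
      calc (1 + |y|) * lo ≤ (1 + |y|) * (a / (1 + |y|)) := by
            apply mul_le_mul_of_nonneg_left h1 (by positivity)
        _ = a := by field_simp
    have h3 : lo ≤ 1 := min_le_left _ _
    have := neg_abs_le y
    linarith
  have hfhi : y ≤ hi - a / hi := by
    have h1 : 1 ≤ hi := le_max_left _ _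
    have h2 : a / hi ≤ a := by
      rw [div_le_iff₀ (lt_of_lt_of_le one_pos h1)]
      nlinarith
    have h3 : y + a ≤ hi := le_max_right _ _
    linarith
  have := intermediate_value_Icc hlohi hcont
  have hy : y ∈ Icc (lo - a / lo) (hi - a / hi) := ⟨hflo, hfhi⟩
  obtain ⟨s, hs, hsy⟩ := this hy
  exact ⟨s, lt_of_lt_of_le hlo_pos hs.1, hsy⟩

lemma glasser_deriv {a : ℝ} {s : ℝ} (hs : s ∈ Ioi (0:ℝ)) :
    HasDerivWithinAt (fun s : ℝ => s - a / s) (1 + a / s ^ 2) (Ioi 0) s := by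
  have hs0 : s ≠ 0 := ne_of_gt hs
  have : HasDerivAt (fun s : ℝ => s - a / s) (1 + a / s ^ 2) s := by
    have h1 : HasDerivAt (fun s : ℝ => a / s) (a * (-(s ^ 2)⁻¹)) s := by
      simpa [div_eq_mul_inv] using (hasDerivAt_inv hs0).const_mul a
    have h2 : HasDerivAt (fun s : ℝ => s - a / s) (1 - a * -(s ^ 2)⁻¹) s := (hasDerivAt_id s).sub h1
    convert h2 using 1
    ring
  exact this.hasDerivWithinAt

lemma glasser_inj {a : ℝ} (ha : 0 < a) :
    InjOn (fun s : ℝ => s - a / s) (Ioi 0) := by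
  have : StrictMonoOn (fun s : ℝ => s - a / s) (Ioi 0) := by
    intro s hs t ht hst
    exact sub_lt_sub hst (div_lt_div_of_pos_left ha hs hst)
  exact this.injOn

lemma inv_image {a : ℝ} (ha : 0 < a) : (fun s : ℝ => a / s) '' Ioi 0 = Ioi 0 := by
  ext y
  constructor
  · rintro ⟨s, hs, rfl⟩
    exact div_pos ha hs
  · intro hy
    exact ⟨a / y, div_pos ha hy, by field_simp⟩

lemma inv_deriv {a : ℝ} {s : ℝ} (hs : s ∈ Ioi (0:ℝ)) :
    HasDerivWithinAt (fun s : ℝ => a / s) (-(a / s ^ 2)) (Ioi 0) s := by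
  have hs0 : s ≠ 0 := ne_of_gt hs
  have : HasDerivAt (fun s : ℝ => a / s) (-(a / s ^ 2)) s := by
    have h1 : HasDerivAt (fun s : ℝ => a / s) (a * (-(s ^ 2)⁻¹)) s := by
      simpa [div_eq_mul_inv] using (hasDerivAt_inv hs0).const_mul a
    convert h1 using 1
    field_simp
  exact this.hasDerivWithinAt

lemma inv_injOn {a : ℝ} (ha : 0 < a) : InjOn (fun s : ℝ => a / s) (Ioi 0) := by
  intro s hs t ht h
  have hs0 : s ≠ 0 := ne_of_gt hs
  have ht0 : t ≠ 0 := ne_of_gt ht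
  have ha0 : a ≠ 0 := ne_of_gt ha
  have e1 : a / (a / s) = s := by field_simp
  have e2 : a / (a / t) = t := by field_simp
  simp only at h
  rw [← e1, ← e2, h]

lemma glasser_intK {a : ℝ} (ha : 0 < a) :
    IntegrableOn (fun s : ℝ => Real.exp (-(s - a / s) ^ 2)) (Ioi 0) := by
  have h := (integrableOn_exp_neg_sq_sub (b := a ^ 2) (sq_nonneg a)).const_mul (Real.exp (2 * a))
  apply IntegrableOn.congr_fun h ?_ measurableSet_Ioi
  intro s hs
  have hs0 : (s:ℝ) ≠ 0 := ne_of_gt hs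
  dsimp only
  rw [← Real.exp_add]
  congr 1
  field_simp
  ring

lemma glasser {a : ℝ} (ha : 0 < a) :
    ∫ s in Ioi (0:ℝ), Real.exp (-(s - a / s) ^ 2) = Real.sqrt π / 2 := by
  -- change of variables u = a / s
  have hB : ∫ x in Ioi (0:ℝ), Real.exp (-(x - a / x) ^ 2)
      = ∫ s in Ioi (0:ℝ), (a / s ^ 2) * Real.exp (-(s - a / s) ^ 2) := by
    have := integral_image_eq_integral_abs_deriv_smul measurableSet_Ioi
      (fun x hx => inv_deriv (a := a) hx) (inv_injOn ha)
      (fun x : ℝ => Real.exp (-(x - a / x) ^ 2))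
    rw [inv_image ha] at this
    rw [this]
    apply setIntegral_congr_fun measurableSet_Ioi
    intro s hs
    have hs0 : (s:ℝ) ≠ 0 := ne_of_gt hs
    have ha0 : a ≠ 0 := ne_of_gt ha
    have e1 : a / (a / s) = s := by field_simp
    dsimp only
    rw [smul_eq_mul, e1, abs_neg, abs_of_nonneg (by positivity : (0:ℝ) ≤ a / s ^ 2)]
    congr 2
    ring
  have intK := glasser_intK ha
  have intK2 : IntegrableOn (fun s : ℝ => (a / s ^ 2) * Real.exp (-(s - a / s) ^ 2)) (Ioi 0) := by
    have h := (integrableOn_image_iff_integrableOn_abs_deriv_smul measurableSet_Ioi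
      (fun x hx => inv_deriv (a := a) hx) (inv_injOn ha)
      (fun x : ℝ => Real.exp (-(x - a / x) ^ 2))).mp (by rw [inv_image ha]; exact intK)
    apply IntegrableOn.congr_fun h ?_ measurableSet_Ioi
    intro s hs
    have hs0 : (s:ℝ) ≠ 0 := ne_of_gt hs
    have ha0 : a ≠ 0 := ne_of_gt ha
    have e1 : a / (a / s) = s := by field_simp
    dsimp only
    rw [smul_eq_mul, e1, abs_neg, abs_of_nonneg (by positivity : (0:ℝ) ≤ a / s ^ 2)]
    congr 2
    ring
  -- change of variables u = s - a / s over Ioi 0, image = univ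
  have hA : ∫ x : ℝ, Real.exp (-x ^ 2)
      = ∫ s in Ioi (0:ℝ), (1 + a / s ^ 2) * Real.exp (-(s - a / s) ^ 2) := by
    have := integral_image_eq_integral_abs_deriv_smul measurableSet_Ioi
      (fun x hx => glasser_deriv (a := a) hx) (glasser_inj ha)
      (fun x : ℝ => Real.exp (-x ^ 2))
    rw [glasser_image ha, Measure.restrict_univ] at this
    rw [this]
    apply setIntegral_congr_fun measurableSet_Ioi
    intro s hs
    have h1 : (0:ℝ) ≤ 1 + a / s ^ 2 := by positivity
    simp [smul_eq_mul, abs_of_nonneg h1]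
  have hGauss : ∫ x : ℝ, Real.exp (-x ^ 2) = Real.sqrt π := by
    simpa using integral_gaussian 1
  have hsplit : ∫ s in Ioi (0:ℝ), (1 + a / s ^ 2) * Real.exp (-(s - a / s) ^ 2)
      = (∫ s in Ioi (0:ℝ), Real.exp (-(s - a / s) ^ 2))
        + ∫ s in Ioi (0:ℝ), (a / s ^ 2) * Real.exp (-(s - a / s) ^ 2) := by
    rw [← integral_add intK intK2]
    congr 1
    ext s
    ring
  have : Real.sqrt π = (∫ s in Ioi (0:ℝ), Real.exp (-(s - a / s) ^ 2))
      + ∫ s in Ioi (0:ℝ), Real.exp (-(s - a / s) ^ 2) := by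
    rw [← hGauss, hA, hsplit, ← hB]
  linarith

lemma Jint {b : ℝ} (hb : 0 ≤ b) :
    ∫ s in Ioi (0:ℝ), Real.exp (-s ^ 2 - b / s ^ 2)
      = Real.sqrt π / 2 * Real.exp (-(2 * Real.sqrt b)) := by
  rcases eq_or_lt_of_le hb with hb0 | hb0
  · rw [← hb0]
    simp only [Real.sqrt_zero, mul_zero, neg_zero, Real.exp_zero, mul_one]
    have : ∫ s in Ioi (0:ℝ), Real.exp (-s ^ 2 - 0 / s ^ 2)
        = ∫ s in Ioi (0:ℝ), Real.exp (-1 * s ^ 2) := by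
      congr 1
      ext s
      norm_num
    rw [this, integral_gaussian_Ioi]
    norm_num
  · set a := Real.sqrt b with ha_def
    have ha : 0 < a := Real.sqrt_pos.mpr hb0
    have ha2 : a ^ 2 = b := Real.sq_sqrt hb
    have : ∫ s in Ioi (0:ℝ), Real.exp (-s ^ 2 - b / s ^ 2)
        = ∫ s in Ioi (0:ℝ), Real.exp (-(2 * a)) * Real.exp (-(s - a / s) ^ 2) := by
      apply setIntegral_congr_fun measurableSet_Ioi
      intro s hs
      have hs0 : (s:ℝ) ≠ 0 := ne_of_gt hs
      dsimp only
      rw [← Real.exp_add]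
      congr 1
      rw [← ha2]
      field_simp
      ring
    rw [this, integral_const_mul, glasser ha]
    ring

lemma sq_image {c : ℝ} (hc : 0 < c) : (fun s : ℝ => c / s ^ 2) '' Ioi 0 = Ioi 0 := by
  ext y
  constructor
  · rintro ⟨s, hs, rfl⟩
    exact div_pos hc (pow_pos hs 2)
  · intro hy
    refine ⟨Real.sqrt (c / y), Real.sqrt_pos.mpr (div_pos hc hy), ?_⟩
    have : Real.sqrt (c / y) ^ 2 = c / y := Real.sq_sqrt (le_of_lt (div_pos hc hy))
    simp only [this]
    field_simp

lemma sq_deriv {c : ℝ} {s : ℝ} (hs : s ∈ Ioi (0:ℝ)) :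
    HasDerivWithinAt (fun s : ℝ => c / s ^ 2) (-(2 * c / s ^ 3)) (Ioi 0) s := by
  have hs0 : s ≠ 0 := ne_of_gt hs
  have h1 : HasDerivAt (fun s : ℝ => c / s ^ 2)
      ((0 * s ^ 2 - c * (2 * s ^ 1)) / (s ^ 2) ^ 2) s :=
    (hasDerivAt_const s c).div (hasDerivAt_pow 2 s) (by positivity)
  have : HasDerivAt (fun s : ℝ => c / s ^ 2) (-(2 * c / s ^ 3)) s := by
    convert h1 using 1
    field_simp
    ring
  exact this.hasDerivWithinAt

lemma sq_injOn {c : ℝ} (hc : 0 < c) : InjOn (fun s : ℝ => c / s ^ 2) (Ioi 0) := by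
  intro s hs t ht h
  simp only at h
  have hs0 : (0:ℝ) < s := hs
  have ht0 : (0:ℝ) < t := ht
  field_simp at h
  exact (pow_left_inj₀ hs0.le ht0.le two_ne_zero).mp (by linarith)

lemma rpow_neg_three_half {x : ℝ} (hx : 0 < x) :
    x ^ (-(3:ℝ)/2) = (x * Real.sqrt x)⁻¹ := by
  rw [show (-(3:ℝ)/2) = -(3/2) by norm_num, Real.rpow_neg hx.le]
  congr 1
  rw [show (3/2:ℝ) = 1 + 1/2 by norm_num, Real.rpow_add hx, Real.rpow_one,
    ← Real.sqrt_eq_rpow]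

lemma subord_eqOn {c d : ℝ} (hc : 0 < c) {s : ℝ} (hs : s ∈ Ioi (0:ℝ)) :
    |(-(2 * c / s ^ 3))| * ((c / s ^ 2) ^ (-(3:ℝ)/2)
      * Real.exp (-c / (c / s ^ 2) - d * (c / s ^ 2)))
    = (2 / Real.sqrt c) * Real.exp (-s ^ 2 - (c * d) / s ^ 2) := by
  have hs0 : (0:ℝ) < s := hs
  have hs0' : s ≠ 0 := ne_of_gt hs0
  have hc0 : c ≠ 0 := ne_of_gt hc
  have hsc : Real.sqrt c ≠ 0 := ne_of_gt (Real.sqrt_pos.mpr hc)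
  have h1 : (c / s ^ 2) ^ (-(3:ℝ)/2) = s ^ 3 / (c * Real.sqrt c) := by
    rw [rpow_neg_three_half (div_pos hc (pow_pos hs0 2))]
    have : Real.sqrt (c / s ^ 2) = Real.sqrt c / s := by
      rw [Real.sqrt_div hc.le, Real.sqrt_sq hs0.le]
    rw [this]
    rw [show c / s ^ 2 * (Real.sqrt c / s) = c * Real.sqrt c / s ^ 3 by ring]
    rw [inv_div]
  have h2 : -c / (c / s ^ 2) - d * (c / s ^ 2) = -s ^ 2 - (c * d) / s ^ 2 := by
    field_simp
  rw [h1, h2, abs_neg, abs_of_nonneg (by positivity : (0:ℝ) ≤ 2 * c / s ^ 3)]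
  have hsqc : Real.sqrt c * Real.sqrt c = c := Real.mul_self_sqrt hc.le
  field_simp

lemma subord_integrable {c d : ℝ} (hc : 0 < c) (hd : 0 ≤ d) :
    IntegrableOn (fun t : ℝ => t ^ (-(3:ℝ)/2) * Real.exp (-c / t - d * t)) (Ioi 0) := by
  have h := (integrableOn_image_iff_integrableOn_abs_deriv_smul measurableSet_Ioi
    (fun x hx => sq_deriv (c := c) hx) (sq_injOn hc)
    (fun t : ℝ => t ^ (-(3:ℝ)/2) * Real.exp (-c / t - d * t)))
  rw [sq_image hc] at h
  rw [h]
  have hint := (integrableOn_exp_neg_sq_sub (b := c * d)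
    (mul_nonneg hc.le hd)).const_mul (2 / Real.sqrt c)
  apply IntegrableOn.congr_fun hint ?_ measurableSet_Ioi
  intro s hs
  dsimp only
  rw [smul_eq_mul]
  exact (subord_eqOn hc hs).symm

lemma subord_eq {c d : ℝ} (hc : 0 < c) (hd : 0 ≤ d) :
    ∫ t in Ioi (0:ℝ), t ^ (-(3:ℝ)/2) * Real.exp (-c / t - d * t)
      = Real.sqrt (π / c) * Real.exp (-(2 * Real.sqrt (c * d))) := by
  have h := integral_image_eq_integral_abs_deriv_smul measurableSet_Ioi
    (fun x hx => sq_deriv (c := c) hx) (sq_injOn hc)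
    (fun t : ℝ => t ^ (-(3:ℝ)/2) * Real.exp (-c / t - d * t))
  rw [sq_image hc] at h
  rw [h]
  have : ∫ s in Ioi (0:ℝ), |(-(2 * c / s ^ 3))| •
      ((c / s ^ 2) ^ (-(3:ℝ)/2) * Real.exp (-c / (c / s ^ 2) - d * (c / s ^ 2)))
      = ∫ s in Ioi (0:ℝ), (2 / Real.sqrt c) * Real.exp (-s ^ 2 - (c * d) / s ^ 2) := by
    apply setIntegral_congr_fun measurableSet_Ioi
    intro s hs
    dsimp only
    rw [smul_eq_mul]
    exact subord_eqOn hc hs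
  rw [this, integral_const_mul, Jint (mul_nonneg hc.le hd), Real.sqrt_div Real.pi_pos.le c]
  have hsc : Real.sqrt c ≠ 0 := ne_of_gt (Real.sqrt_pos.mpr hc)
  field_simp

lemma four_pi_rpow : (4 * Real.pi) ^ (-(1:ℝ)/2) = (2 * Real.sqrt π)⁻¹ := by
  rw [show (-(1:ℝ)/2) = -(1/2) by norm_num,
    Real.rpow_neg (by positivity), ← Real.sqrt_eq_rpow,
    show (4:ℝ) * π = (2:ℝ) ^ 2 * π by norm_num,
    Real.sqrt_mul (by positivity), Real.sqrt_sq (by norm_num)]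

lemma bose_term_pt {k β ω μ : ℝ} (t : ℝ) :
    (4 * Real.pi) ^ (-(1:ℝ)/2) * t ^ (-(3:ℝ)/2)
        * (k * Real.exp (-k ^ 2 / (4 * t) + k * (β * μ))) * Real.exp (-t * β ^ 2 * ω ^ 2)
      = ((4 * Real.pi) ^ (-(1:ℝ)/2) * k * Real.exp (k * (β * μ)))
        * (t ^ (-(3:ℝ)/2) * Real.exp (-(k ^ 2 / 4) / t - (β ^ 2 * ω ^ 2) * t)) := by
  have he : Real.exp (-k ^ 2 / (4 * t) + k * (β * μ)) * Real.exp (-t * β ^ 2 * ω ^ 2)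
      = Real.exp (k * (β * μ)) * Real.exp (-(k ^ 2 / 4) / t - (β ^ 2 * ω ^ 2) * t) := by
    rw [← Real.exp_add, ← Real.exp_add]
    congr 1
    field_simp
    rcases eq_or_ne t 0 with ht | ht
    · simp [ht]
      ring
    · field_simp
      ring
  linear_combination ((4 * Real.pi) ^ (-(1:ℝ)/2) * k * t ^ (-(3:ℝ)/2)) * he

lemma bose_term_int {k β ω μ : ℝ} (hk : 0 < k) :
    IntegrableOn (fun t : ℝ => (4 * Real.pi) ^ (-(1:ℝ)/2) * t ^ (-(3:ℝ)/2)
        * (k * Real.exp (-k ^ 2 / (4 * t) + k * (β * μ))) * Real.exp (-t * β ^ 2 * ω ^ 2))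
      (Ioi 0) := by
  have hc : (0:ℝ) < k ^ 2 / 4 := by positivity
  have hd : (0:ℝ) ≤ β ^ 2 * ω ^ 2 := by positivity
  have h := (subord_integrable hc hd).const_mul
    ((4 * Real.pi) ^ (-(1:ℝ)/2) * k * Real.exp (k * (β * μ)))
  apply IntegrableOn.congr_fun h ?_ measurableSet_Ioi
  intro t _
  exact (bose_term_pt t).symm

lemma bose_term_val {k β ω μ : ℝ} (hk : 0 < k) (hβ : 0 < β) (hω : 0 < ω) :
    (∫ t in Ioi (0:ℝ), (4 * Real.pi) ^ (-(1:ℝ)/2) * t ^ (-(3:ℝ)/2)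
        * (k * Real.exp (-k ^ 2 / (4 * t) + k * (β * μ))) * Real.exp (-t * β ^ 2 * ω ^ 2))
      = Real.exp (-(k * (β * (ω - μ)))) := by
  have hc : (0:ℝ) < k ^ 2 / 4 := by positivity
  have hd : (0:ℝ) ≤ β ^ 2 * ω ^ 2 := by positivity
  have h1 : (∫ t in Ioi (0:ℝ), (4 * Real.pi) ^ (-(1:ℝ)/2) * t ^ (-(3:ℝ)/2)
        * (k * Real.exp (-k ^ 2 / (4 * t) + k * (β * μ))) * Real.exp (-t * β ^ 2 * ω ^ 2))
      = ((4 * Real.pi) ^ (-(1:ℝ)/2) * k * Real.exp (k * (β * μ)))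
        * ∫ t in Ioi (0:ℝ), t ^ (-(3:ℝ)/2)
            * Real.exp (-(k ^ 2 / 4) / t - (β ^ 2 * ω ^ 2) * t) := by
    rw [← integral_const_mul]
    apply setIntegral_congr_fun measurableSet_Ioi
    intro t _
    exact bose_term_pt t
  rw [h1, subord_eq hc hd]
  have hcd : Real.sqrt (k ^ 2 / 4 * (β ^ 2 * ω ^ 2)) = k * (β * ω) / 2 := by
    rw [show k ^ 2 / 4 * (β ^ 2 * ω ^ 2) = (k * (β * ω) / 2) ^ 2 by ring]
    exact Real.sqrt_sq (by positivity)
  have hsc : Real.sqrt (k ^ 2 / 4) = k / 2 := by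
    rw [show k ^ 2 / 4 = (k / 2) ^ 2 by ring]
    exact Real.sqrt_sq (by positivity)
  rw [hcd, Real.sqrt_div Real.pi_pos.le, hsc, four_pi_rpow]
  have hpi : Real.sqrt π ≠ 0 := ne_of_gt (Real.sqrt_pos.mpr Real.pi_pos)
  have hk0 : k ≠ 0 := ne_of_gt hk
  rw [show (-(2 * (k * (β * ω) / 2))) = -(k * (β * ω)) by ring]
  have he : Real.exp (-(k * (β * (ω - μ))))
      = Real.exp (k * (β * μ)) * Real.exp (-(k * (β * ω))) := by
    rw [← Real.exp_add]
    congr 1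
    ring
  rw [he]
  field_simp

end BoseAux

open Set Real in
/-- The Bose–Einstein occupation number as a subordinated integral:
for `β > 0`, `ω > 0`, `μ < ω`,
`1/(e^{β(ω−μ)} − 1) = ∫₀^∞ h_b(t, βμ) e^{−tβ²ω²} dt`. -/
theorem bose_einstein_occupation_subordination (β ω μ : ℝ) (hβ : 0 < β) (hω : 0 < ω)
    (hμ : μ < ω) :
    1 / (Real.exp (β * (ω - μ)) - 1)
      = ∫ t in Set.Ioi (0 : ℝ), bosonicKernel t (β * μ) * Real.exp (-t * β ^ 2 * ω ^ 2) := by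
  have hx : 0 < β * (ω - μ) := mul_pos hβ (sub_pos.mpr hμ)
  set r : ℝ := Real.exp (-(β * (ω - μ))) with hr_def
  have hr0 : 0 < r := Real.exp_pos _
  have hr1 : r < 1 := by
    rw [hr_def, Real.exp_lt_one_iff]
    linarith
  set F : ℕ → ℝ → ℝ := fun n t => (4 * Real.pi) ^ (-(1 : ℝ) / 2) * t ^ (-(3 : ℝ) / 2)
      * (((n : ℝ) + 1) * Real.exp (-((n : ℝ) + 1) ^ 2 / (4 * t) + ((n : ℝ) + 1) * (β * μ)))
      * Real.exp (-t * β ^ 2 * ω ^ 2) with hF_def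
  have hpt : ∀ t : ℝ, bosonicKernel t (β * μ) * Real.exp (-t * β ^ 2 * ω ^ 2)
      = ∑' n : ℕ, F n t := by
    intro t
    rw [hF_def, bosonicKernel, ← tsum_mul_left, ← tsum_mul_right]
  have hk_pos : ∀ n : ℕ, (0:ℝ) < (n : ℝ) + 1 := fun n => by positivity
  have hFint : ∀ n : ℕ, IntegrableOn (F n) (Set.Ioi 0) := fun n => by
    rw [hF_def]
    exact bose_term_int (hk_pos n)
  have hFval : ∀ n : ℕ, (∫ t in Set.Ioi (0:ℝ), F n t) = r ^ (n + 1) := by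
    intro n
    rw [hF_def]
    rw [bose_term_val (hk_pos n) hβ hω]
    rw [hr_def, ← Real.exp_nat_mul]
    congr 1
    push_cast
    ring
  have hFnonneg : ∀ n : ℕ, ∀ t ∈ Set.Ioi (0:ℝ), 0 ≤ F n t := by
    intro n t ht
    rw [hF_def]
    have h1 : (0:ℝ) ≤ (4 * Real.pi) ^ (-(1:ℝ)/2) := Real.rpow_nonneg (by positivity) _
    have h2 : (0:ℝ) ≤ t ^ (-(3:ℝ)/2) := Real.rpow_nonneg (le_of_lt ht) _
    have h3 : (0:ℝ) ≤ ((n : ℝ) + 1) * Real.exp (-((n : ℝ) + 1) ^ 2 / (4 * t)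
        + ((n : ℝ) + 1) * (β * μ)) := mul_nonneg (hk_pos n).le (Real.exp_nonneg _)
    exact mul_nonneg (mul_nonneg (mul_nonneg h1 h2) h3) (Real.exp_nonneg _)
  have hlint : ∀ n : ℕ, (∫⁻ t, ‖F n t‖₊ ∂(volume.restrict (Set.Ioi 0)))
      = ENNReal.ofReal (r ^ (n + 1)) := by
    intro n
    simp_rw [← enorm_eq_nnnorm]
    rw [← ofReal_integral_norm_eq_lintegral_enorm (hFint n)]
    congr 1
    rw [← hFval n]
    apply setIntegral_congr_fun measurableSet_Ioi
    intro t ht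
    exact norm_of_nonneg (hFnonneg n t ht)
  have hsum : Summable (fun n : ℕ => r ^ (n + 1)) := by
    simp_rw [pow_succ]
    exact (summable_geometric_of_lt_one hr0.le hr1).mul_right r
  have hne : (∑' n : ℕ, ∫⁻ t, ‖F n t‖₊ ∂(volume.restrict (Set.Ioi 0))) ≠ ⊤ := by
    rw [tsum_congr hlint,
      ← ENNReal.ofReal_tsum_of_nonneg (fun n => pow_nonneg hr0.le _) hsum]
    exact ENNReal.ofReal_ne_top
  have hs : (∑' n : ℕ, r ^ (n + 1)) = (1 - r)⁻¹ * r := by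
    simp_rw [pow_succ]
    rw [tsum_mul_right, tsum_geometric_of_lt_one hr0.le hr1]
  have key : (∫ t in Set.Ioi (0:ℝ), bosonicKernel t (β * μ)
      * Real.exp (-t * β ^ 2 * ω ^ 2)) = (1 - r)⁻¹ * r := by
    calc (∫ t in Set.Ioi (0:ℝ), bosonicKernel t (β * μ) * Real.exp (-t * β ^ 2 * ω ^ 2))
        = ∫ t in Set.Ioi (0:ℝ), ∑' n : ℕ, F n t :=
          setIntegral_congr_fun measurableSet_Ioi (fun t _ => hpt t)
      _ = ∑' n : ℕ, ∫ t in Set.Ioi (0:ℝ), F n t :=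
          integral_tsum (fun n => (hFint n).aestronglyMeasurable) hne
      _ = ∑' n : ℕ, r ^ (n + 1) := tsum_congr hFval
      _ = (1 - r)⁻¹ * r := hs
  rw [key]
  have hrE : r * Real.exp (β * (ω - μ)) = 1 := by
    rw [hr_def, ← Real.exp_add]
    simp
  have h1r : 1 - r ≠ 0 := by linarith
  have hE1 : Real.exp (β * (ω - μ)) - 1 ≠ 0 := by
    have h := Real.exp_lt_exp.mpr hx
    rw [Real.exp_zero] at h
    linarith
  field_simp
  linarith [hrE]
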